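/- Let A_0 = u v' be a nonnegative rank-one d×d matrix and A = A_1 a nonnegative d×d matrix with v'u > 0 and v'Au > 0, and let ω = 01001010⋯ be the Fibonacci sequence (fixed point of 0↦01, 1↦0). Then lim_{n→∞} (1/n) log ‖A_{ω_0} ⋯ A_{ω_{n-1}}‖ = (√5 − 2) log(v'u) + ((3−√5)/2) log(v'Au). Moreover, if v'u = 0 or v'Au = 0, then A_{ω_0}⋯A_{ω_{n-1}} = 0 for all n ≥ 4. -/

import Mathlib

open Filter Topology Matrix

/-- The entry-sum norm `‖A‖ = ∑ᵢⱼ |aᵢⱼ|`. -/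
def entrySumNorm {d : ℕ} (A : Matrix (Fin d) (Fin d) ℝ) : ℝ := ∑ i, ∑ j, |A i j|

/-- The product `A_{ω₀} A_{ω₁} ⋯ A_{ω_{n-1}}` of matrices selected along the sequence `ω`. -/
def prodAlong {d m : ℕ} (A : Fin m → Matrix (Fin d) (Fin d) ℝ) (ω : ℕ → Fin m) (n : ℕ) :
    Matrix (Fin d) (Fin d) ℝ :=
  (List.ofFn fun i : Fin n => A (ω i)).prod

/-- The Fibonacci substitution `0 ↦ 01`, `1 ↦ 0`. -/
def fibSub : Fin 2 → List (Fin 2)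
  | 0 => [0, 1]
  | 1 => [0]

/-- The Fibonacci sequence, the fixed point `ζ^∞(0)` of the Fibonacci substitution. -/
def fibSeq (k : ℕ) : Fin 2 :=
  ((fun l => l.flatMap fibSub)^[k + 2] [0]).getD k 0

/-!
Because `A₀ = u vᵀ` has rank one and the Fibonacci word `ω` starts with `0` and has no factor
`11`, the product `A_{ω₀} ⋯ A_{ωₙ}` collapses to a scalar multiple of `u wᵀ`, with `w ∈ {v, A₁ᵀv}`:
every factor `00` among the first `n + 1` letters contributes `vᵀu` and every letter `1` among the
first `n` contributes `vᵀA₁u`. These counts are determined by the number of zeros, whose discrepancy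
from `n/φ = -nψ` is at most `1`: the prefixes of Fibonacci length `F_{k+2}` are the words `ζᵏ(0)`,
and splitting `n` along its Zeckendorf expansion adds one error term `ψᵏ` per summand. Hence the
logarithm of the norm is `n(√5 - 2) log vᵀu + n(3 - √5)/2 log vᵀA₁u + O(1)`. If one of the scalars
vanishes, the product dies as soon as a factor `00` (at position 2) and a `1` (at position 1) have
occurred.
-/

open Real
open scoped goldenRatio

def fibWord (k : ℕ) : List (Fin 2) := (fun l => l.flatMap fibSub)^[k] [0]

theorem fibWord_succ (k : ℕ) : fibWord (k + 1) = (fibWord k).flatMap fibSub :=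
  Function.iterate_succ_apply' _ _ _

theorem fibWord_add_two (k : ℕ) : fibWord (k + 2) = fibWord (k + 1) ++ fibWord k := by
  induction k with
  | zero => decide
  | succ k ih =>
    rw [fibWord_succ (k + 2), ih, List.flatMap_append, ← fibWord_succ (k + 1), ← fibWord_succ k, ih]

theorem length_fibWord (k : ℕ) : (fibWord k).length = Nat.fib (k + 2) := by
  induction k using Nat.twoStepInduction with
  | zero => decide
  | one => decide
  | more k ih₀ ih₁ =>
    rw [fibWord_add_two, List.length_append, ih₀, ih₁, Nat.fib_add_two (n := k + 2), add_comm]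

theorem lt_length_fibWord {k m : ℕ} (h : k + 2 ≤ m) : k < (fibWord m).length := by
  rw [length_fibWord]
  have : m ≤ Nat.fib (m + 2) := Nat.fib_add_two_strictMono.id_le m
  omega

theorem fibWord_isPrefix_of_le {k m : ℕ} (h : k ≤ m) : fibWord k <+: fibWord m := by
  induction m, h using Nat.le_induction with
  | base => exact List.prefix_refl _
  | succ m _ ih =>
    refine ih.trans ?_
    cases m with
    | zero => exact ⟨[1], by decide⟩
    | succ m => exact ⟨fibWord m, (fibWord_add_two m).symm⟩

theorem head?_fibWord (k : ℕ) : (fibWord k).head? = some 0 := by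
  obtain ⟨t, ht⟩ := fibWord_isPrefix_of_le (Nat.zero_le k)
  rw [← ht]
  rfl

theorem fibSeq_eq_getD_fibWord {k m : ℕ} (hk : k < (fibWord m).length) :
    fibSeq k = (fibWord m).getD k 0 := by
  change (fibWord (k + 2)).getD k 0 = _
  obtain h | h := le_total m (k + 2)
  · obtain ⟨t, ht⟩ := fibWord_isPrefix_of_le h
    rw [← ht, List.getD_append _ _ _ _ hk]
  · obtain ⟨t, ht⟩ := fibWord_isPrefix_of_le h
    rw [← ht, List.getD_append _ _ _ _ (lt_length_fibWord le_rfl)]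

theorem fibSeq_fib_add {k j : ℕ} (hj : j < Nat.fib (k + 2)) :
    fibSeq (Nat.fib (k + 3) + j) = fibSeq j := by
  have hlen : (fibWord (k + 1)).length = Nat.fib (k + 3) := length_fibWord (k + 1)
  have hj' : j < (fibWord k).length := by rwa [length_fibWord]
  rw [fibSeq_eq_getD_fibWord (m := k + 2) (by rw [fibWord_add_two, List.length_append]; omega),
    fibWord_add_two, List.getD_append_right _ _ _ _ (by omega), hlen, Nat.add_sub_cancel_left,
    fibSeq_eq_getD_fibWord hj']

theorem isChain_fibWord (k : ℕ) : (fibWord k).IsChain (fun a b : Fin 2 => a = 1 → b = 0) := by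
  induction k using Nat.twoStepInduction with
  | zero => decide
  | one => decide
  | more k ih₀ ih₁ =>
    rw [fibWord_add_two]
    refine ih₁.append ih₀ fun _ _ b hb _ => ?_
    rw [head?_fibWord] at hb
    exact (Option.mem_some_iff.mp hb).symm

theorem fibSeq_zero : fibSeq 0 = 0 := rfl

theorem fibSeq_add_one_eq_zero {k : ℕ} (h : fibSeq k = 1) : fibSeq (k + 1) = 0 := by
  have hk : k + 1 < (fibWord (k + 3)).length := lt_length_fibWord le_rfl
  rw [fibSeq_eq_getD_fibWord (m := k + 3) (by omega), List.getD_eq_getElem _ _ (by omega)] at h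
  rw [fibSeq_eq_getD_fibWord hk, List.getD_eq_getElem _ _ hk]
  exact (isChain_fibWord (k + 3)).getElem k hk h

theorem count_eq_zero_add_count_eq_one (ω : ℕ → Fin 2) (n : ℕ) :
    Nat.count (ω · = 0) n + Nat.count (ω · = 1) n = n := by
  induction n with
  | zero => rfl
  | succ n ih =>
    rw [Nat.count_succ, Nat.count_succ]
    rcases (by omega : ω n = 0 ∨ ω n = 1) with h | h <;> simp [h] <;> omega

theorem count_zero_zero_add_eq {ω : ℕ → Fin 2} (hω₀ : ω 0 = 0)
    (hω : ∀ j, ω j = 1 → ω (j + 1) = 0) (n : ℕ) :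
    Nat.count (fun j => ω j = 0 ∧ ω (j + 1) = 0) n + (n + 1) =
      Nat.count (ω · = 0) n + Nat.count (ω · = 0) (n + 1) := by
  induction n with
  | zero => simp [Nat.count_succ, hω₀]
  | succ n ih =>
    simp only [Nat.count_succ] at ih ⊢
    rcases (by omega : ω n = 0 ∨ ω n = 1) with h | h
    · rcases (by omega : ω (n + 1) = 0 ∨ ω (n + 1) = 1) with h' | h' <;>
        simp [h, h'] at ih ⊢ <;> omega
    · simp [h, hω n h] at ih ⊢
      omega

section RankOneProducts

variable {d : ℕ}

theorem prodAlong_succ {m : ℕ} (A : Fin m → Matrix (Fin d) (Fin d) ℝ) (ω : ℕ → Fin m) (n : ℕ) :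
    prodAlong A ω (n + 1) = prodAlong A ω n * A (ω n) := by
  rw [prodAlong, List.ofFn_succ', List.prod_concat]
  rfl

theorem prodAlong_succ_eq_smul_vecMulVec {u v : Fin d → ℝ} {A : Fin 2 → Matrix (Fin d) (Fin d) ℝ}
    {ω : ℕ → Fin 2} (hA₀ : A 0 = vecMulVec u v) (hω₀ : ω 0 = 0)
    (hω : ∀ j, ω j = 1 → ω (j + 1) = 0) (n : ℕ) :
    prodAlong A ω (n + 1) =
      ((v ⬝ᵥ u) ^ Nat.count (fun j => ω j = 0 ∧ ω (j + 1) = 0) n *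
          (v ⬝ᵥ A 1 *ᵥ u) ^ Nat.count (ω · = 1) n) •
        vecMulVec u (if ω n = 0 then v else v ᵥ* A 1) := by
  induction n with
  | zero => simp [prodAlong, hω₀, hA₀]
  | succ n ih =>
    rw [prodAlong_succ, ih, Matrix.smul_mul]
    simp only [Nat.count_succ]
    rcases (by omega : ω n = 0 ∨ ω n = 1) with h | h
    · rcases (by omega : ω (n + 1) = 0 ∨ ω (n + 1) = 1) with h' | h'
      · simp [h, h', hA₀, vecMulVec_mul_vecMulVec, vecMulVec_smul, smul_smul, pow_succ]
        ring_nf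
      · simp [h, h', vecMulVec_mul]
    · simp [h, hω n h, hA₀, vecMulVec_mul_vecMulVec, vecMulVec_smul, smul_smul, pow_succ,
        dotProduct_mulVec]
      ring_nf

end RankOneProducts

section EntrySumNorm

variable {d : ℕ}

theorem entrySumNorm_smul (c : ℝ) (M : Matrix (Fin d) (Fin d) ℝ) :
    entrySumNorm (c • M) = |c| * entrySumNorm M := by
  simp only [entrySumNorm, Matrix.smul_apply, smul_eq_mul, abs_mul, Finset.mul_sum]

theorem abs_le_entrySumNorm (M : Matrix (Fin d) (Fin d) ℝ) (i j : Fin d) :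
    |M i j| ≤ entrySumNorm M :=
  calc |M i j| ≤ ∑ j, |M i j| :=
        Finset.single_le_sum (f := fun j => |M i j|) (fun _ _ => abs_nonneg _) (Finset.mem_univ j)
    _ ≤ entrySumNorm M :=
        Finset.single_le_sum (f := fun i => ∑ j, |M i j|)
          (fun _ _ => Finset.sum_nonneg fun _ _ => abs_nonneg _) (Finset.mem_univ i)

theorem entrySumNorm_vecMulVec_pos {u w : Fin d → ℝ} (h : w ⬝ᵥ u ≠ 0) :
    0 < entrySumNorm (vecMulVec u w) := by
  obtain ⟨i, -, hi⟩ := Finset.exists_ne_zero_of_sum_ne_zero h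
  refine (abs_pos.2 ?_).trans_le (abs_le_entrySumNorm _ i i)
  rw [vecMulVec_apply, mul_comm]
  exact hi

end EntrySumNorm

theorem count_fibSeq_eq_zero_fib_add {k j : ℕ} (hj : j ≤ Nat.fib (k + 2)) :
    Nat.count (fibSeq · = 0) (Nat.fib (k + 3) + j) =
      Nat.count (fibSeq · = 0) (Nat.fib (k + 3)) + Nat.count (fibSeq · = 0) j := by
  rw [Nat.count_add]
  congr 1
  simp only [Nat.count_eq_card_filter_range]
  exact congrArg _ (Finset.filter_congr fun i hi => by
    rw [fibSeq_fib_add (by rw [Finset.mem_range] at hi; omega)])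

theorem count_fibSeq_eq_zero_fib (k : ℕ) :
    Nat.count (fibSeq · = 0) (Nat.fib (k + 3)) = Nat.fib (k + 2) := by
  induction k using Nat.twoStepInduction with
  | zero => decide
  | one => decide
  | more k ih₀ ih₁ =>
    rw [Nat.fib_add_two (n := k + 3), add_comm, count_fibSeq_eq_zero_fib_add le_rfl, ih₁, ih₀,
      Nat.fib_add_two (n := k + 2), add_comm]

-- The bound `1 - |ψ| ^ m` is inductive because `|ψ| ^ 2 + |ψ| ^ 3 = -ψ ≤ 1`.
theorem abs_count_fibSeq_eq_zero_add_mul_goldenConj_le {m n : ℕ} (hn : n < Nat.fib (m + 2)) :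
    |(Nat.count (fibSeq · = 0) n : ℝ) + n * ψ| ≤ 1 - |ψ| ^ m := by
  have hψ : |ψ| = -ψ := abs_of_neg Real.goldenConj_neg
  have hψ₁ := Real.neg_one_lt_goldenConj
  induction m using Nat.twoStepInduction generalizing n with
  | zero =>
    obtain rfl : n = 0 := by simpa using hn
    simp
  | one =>
    change n < 2 at hn
    obtain rfl | rfl : n = 0 ∨ n = 1 := by omega
    · simp [hψ]; linarith
    · simp [Nat.count_succ, fibSeq_zero, hψ, abs_of_pos (show 0 < 1 + ψ by linarith)]
  | more m ih₀ ih₁ =>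
    obtain hn' | hn' := lt_or_ge n (Nat.fib (m + 3))
    · have : |ψ| ^ (m + 2) ≤ |ψ| ^ (m + 1) :=
        pow_le_pow_of_le_one (abs_nonneg ψ) (by rw [hψ]; linarith) (by omega)
      linarith [ih₁ hn']
    obtain ⟨j, rfl⟩ := Nat.exists_eq_add_of_le hn'
    have hj : j < Nat.fib (m + 2) := by
      have : Nat.fib (m + 2 + 2) = Nat.fib (m + 2) + Nat.fib (m + 3) := Nat.fib_add_two
      omega
    have hshift : (Nat.count (fibSeq · = 0) (Nat.fib (m + 3) + j) : ℝ) + ↑(Nat.fib (m + 3) + j) * ψ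
        = ψ ^ (m + 3) + ((Nat.count (fibSeq · = 0) j : ℝ) + j * ψ) := by
      rw [count_fibSeq_eq_zero_fib_add hj.le, count_fibSeq_eq_zero_fib,
        ← Real.goldenConj_mul_fib_succ_add_fib (m + 2)]
      push_cast
      ring
    have hcube : |ψ| ^ 2 + |ψ| ^ 3 ≤ 1 := by
      rw [hψ]; nlinarith [Real.goldenConj_sq]
    calc _ = |ψ ^ (m + 3) + ((Nat.count (fibSeq · = 0) j : ℝ) + j * ψ)| := by rw [hshift]
      _ ≤ |ψ| ^ (m + 3) + (1 - |ψ| ^ m) := by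
        rw [← abs_pow]; exact (abs_add_le _ _).trans (add_le_add le_rfl (ih₀ hj))
      _ ≤ 1 - |ψ| ^ (m + 2) := by
        rw [pow_add, pow_add]
        nlinarith [mul_le_mul_of_nonneg_left hcube (pow_nonneg (abs_nonneg ψ) m)]

theorem abs_count_fibSeq_eq_zero_add_mul_goldenConj_le_one (n : ℕ) :
    |(Nat.count (fibSeq · = 0) n : ℝ) + n * ψ| ≤ 1 := by
  have hn : n < Nat.fib (n + 1 + 2) := Nat.fib_add_two_strictMono.id_le (n + 1)
  exact (abs_count_fibSeq_eq_zero_add_mul_goldenConj_le hn).trans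
    (sub_le_self _ (pow_nonneg (abs_nonneg _) _))

theorem abs_count_fibSeq_eq_one_sub_le (m : ℕ) :
    |(Nat.count (fibSeq · = 1) m : ℝ) - (m + 1) * ((3 - √5) / 2)| ≤ 2 := by
  have hD := abs_le.1 (abs_count_fibSeq_eq_zero_add_mul_goldenConj_le_one m)
  have hsum : (Nat.count (fibSeq · = 0) m : ℝ) + Nat.count (fibSeq · = 1) m = m := by
    exact_mod_cast count_eq_zero_add_count_eq_one fibSeq m
  have h5 : √5 = 1 - 2 * ψ := by rw [Real.goldenConj]; ring
  have hψ₀ := Real.goldenConj_neg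
  have hψ₁ := Real.neg_one_lt_goldenConj
  rw [h5, abs_le]
  constructor <;> linarith

theorem abs_count_fibSeq_zero_zero_sub_le (m : ℕ) :
    |(Nat.count (fun j => fibSeq j = 0 ∧ fibSeq (j + 1) = 0) m : ℝ) - (m + 1) * (√5 - 2)| ≤ 3 := by
  have hD := abs_le.1 (abs_count_fibSeq_eq_zero_add_mul_goldenConj_le_one m)
  have hD' := abs_le.1 (abs_count_fibSeq_eq_zero_add_mul_goldenConj_le_one (m + 1))
  have hsum : (Nat.count (fun j => fibSeq j = 0 ∧ fibSeq (j + 1) = 0) m : ℝ) + (m + 1) =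
      Nat.count (fibSeq · = 0) m + Nat.count (fibSeq · = 0) (m + 1) := by
    exact_mod_cast count_zero_zero_add_eq fibSeq_zero (fun _ => fibSeq_add_one_eq_zero) m
  have h5 : √5 = 1 - 2 * ψ := by rw [Real.goldenConj]; ring
  have hψ₁ := Real.neg_one_lt_goldenConj
  have hψ₀ := Real.goldenConj_neg
  push_cast at hD'
  rw [h5, abs_le]
  constructor <;> linarith

theorem tendsto_div_of_eventually_abs_sub_mul_le {x : ℕ → ℝ} {c C : ℝ}
    (h : ∀ᶠ n in atTop, |x n - n * c| ≤ C) : Tendsto (fun n => x n / n) atTop (𝓝 c) := by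
  have hO : (fun n : ℕ => x n - n * c) =O[atTop] (fun _ => (1 : ℝ)) :=
    Asymptotics.IsBigO.of_bound C (h.mono fun n hn => by simpa using hn)
  have ho : (fun n : ℕ => x n - n * c) =o[atTop] (fun n => (n : ℝ)) :=
    hO.trans_isLittleO ((Asymptotics.isLittleO_one_left_iff ℝ).2
      (tendsto_norm_atTop_atTop.comp tendsto_natCast_atTop_atTop))
  have hlim := ho.tendsto_div_nhds_zero.add_const c
  rw [zero_add] at hlim
  refine hlim.congr' ?_
  filter_upwards [eventually_ne_atTop 0] with n hn
  field_simp
  ring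

theorem abs_log_entrySumNorm_prodAlong_fibSeq_sub_le {d : ℕ} {u v : Fin d → ℝ}
    {A : Fin 2 → Matrix (Fin d) (Fin d) ℝ} (hA₀ : A 0 = vecMulVec u v)
    (ha : 0 < v ⬝ᵥ u) (hb : 0 < v ⬝ᵥ A 1 *ᵥ u) (m : ℕ) :
    |log (entrySumNorm (prodAlong A fibSeq (m + 1))) -
        (m + 1) * ((√5 - 2) * log (v ⬝ᵥ u) + ((3 - √5) / 2) * log (v ⬝ᵥ A 1 *ᵥ u))| ≤
      3 * |log (v ⬝ᵥ u)| + 2 * |log (v ⬝ᵥ A 1 *ᵥ u)| +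
        (|log (entrySumNorm (vecMulVec u v))| +
          |log (entrySumNorm (vecMulVec u (v ᵥ* A 1)))|) := by
  set g := Nat.count (fun j => fibSeq j = 0 ∧ fibSeq (j + 1) = 0) m
  set h := Nat.count (fibSeq · = 1) m
  set w := if fibSeq m = 0 then v else v ᵥ* A 1
  have hw : 0 < entrySumNorm (vecMulVec u w) := by
    refine entrySumNorm_vecMulVec_pos ?_
    simp only [w]
    split_ifs
    · exact ha.ne'
    · exact (dotProduct_mulVec v (A 1) u ▸ hb).ne'
  have hlog : log (entrySumNorm (prodAlong A fibSeq (m + 1))) =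
      g * log (v ⬝ᵥ u) + h * log (v ⬝ᵥ A 1 *ᵥ u) +
        log (entrySumNorm (vecMulVec u w)) := by
    rw [prodAlong_succ_eq_smul_vecMulVec hA₀ fibSeq_zero (fun _ => fibSeq_add_one_eq_zero),
      entrySumNorm_smul, abs_of_pos (by positivity), log_mul (by positivity) hw.ne',
      log_mul (by positivity) (by positivity), log_pow, log_pow]
  have hw_le : |log (entrySumNorm (vecMulVec u w))| ≤
      |log (entrySumNorm (vecMulVec u v))| +
        |log (entrySumNorm (vecMulVec u (v ᵥ* A 1)))| := by
    simp only [w]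
    split_ifs
    · exact le_add_of_nonneg_right (abs_nonneg _)
    · exact le_add_of_nonneg_left (abs_nonneg _)
  rw [hlog]
  calc _ = |(g - (m + 1) * (√5 - 2)) * log (v ⬝ᵥ u) +
        (h - (m + 1) * ((3 - √5) / 2)) * log (v ⬝ᵥ A 1 *ᵥ u) +
          log (entrySumNorm (vecMulVec u w))| := by ring_nf
    _ ≤ |g - (m + 1) * (√5 - 2)| * |log (v ⬝ᵥ u)| +
        |h - (m + 1) * ((3 - √5) / 2)| * |log (v ⬝ᵥ A 1 *ᵥ u)| +
          |log (entrySumNorm (vecMulVec u w))| := by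
      rw [← abs_mul, ← abs_mul]
      exact abs_add_three _ _ _
    _ ≤ _ := by
      gcongr
      · exact abs_count_fibSeq_zero_zero_sub_le m
      · exact abs_count_fibSeq_eq_one_sub_le m

theorem lyapunov_fibonacci_general {d : ℕ} (u v : Fin d → ℝ)
    (A : Fin 2 → Matrix (Fin d) (Fin d) ℝ)
    (hA0 : A 0 = vecMulVec u v) :
    ((0 < v ⬝ᵥ u ∧ 0 < v ⬝ᵥ (A 1).mulVec u) →
      Tendsto (fun n => Real.log (entrySumNorm (prodAlong A fibSeq n)) / n) atTop
        (𝓝 ((Real.sqrt 5 - 2) * Real.log (v ⬝ᵥ u) +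
          ((3 - Real.sqrt 5) / 2) * Real.log (v ⬝ᵥ (A 1).mulVec u)))) ∧
    ((v ⬝ᵥ u = 0 ∨ v ⬝ᵥ (A 1).mulVec u = 0) →
      ∀ n, 4 ≤ n → prodAlong A fibSeq n = 0) := by
  refine ⟨fun ⟨ha, hb⟩ => ?_, fun hab n hn => ?_⟩
  · apply tendsto_div_of_eventually_abs_sub_mul_le
    filter_upwards [eventually_ge_atTop 1] with n hn
    obtain ⟨m, rfl⟩ := Nat.exists_eq_add_of_le' hn
    push_cast
    exact abs_log_entrySumNorm_prodAlong_fibSeq_sub_le hA0 ha hb m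
  · obtain ⟨m, rfl⟩ := Nat.exists_eq_add_of_le' (by omega : 1 ≤ n)
    have h00 : Nat.count (fun j => fibSeq j = 0 ∧ fibSeq (j + 1) = 0) m ≠ 0 :=
      Nat.count_ne_iff_exists.2 ⟨2, by omega, by decide⟩
    have h1 : Nat.count (fibSeq · = 1) m ≠ 0 :=
      Nat.count_ne_iff_exists.2 ⟨1, by omega, by decide⟩
    rw [prodAlong_succ_eq_smul_vecMulVec hA0 fibSeq_zero (fun _ => fibSeq_add_one_eq_zero)]
    rcases hab with h | h <;> simp [h, h00, h1]

/-- For `A₀ = u vᵀ` a nonnegative rank-one matrix and `A₁` nonnegative, with matrices selected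
along the Fibonacci sequence: if `vᵀu > 0` and `vᵀA₁u > 0` then the Lyapunov exponent exists and
equals `(√5 - 2) log(vᵀu) + ((3-√5)/2) log(vᵀA₁u)`; moreover if `vᵀu = 0` or `vᵀA₁u = 0` then
the product vanishes from `n = 4` on. -/
theorem lyapunov_fibonacci {d : ℕ} (u v : Fin d → ℝ)
    (hu : ∀ i, 0 ≤ u i) (hv : ∀ i, 0 ≤ v i)
    (A : Fin 2 → Matrix (Fin d) (Fin d) ℝ)
    (hA0 : A 0 = vecMulVec u v) (hA1 : ∀ i j, 0 ≤ A 1 i j) :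
    ((0 < v ⬝ᵥ u ∧ 0 < v ⬝ᵥ (A 1).mulVec u) →
      Tendsto (fun n => Real.log (entrySumNorm (prodAlong A fibSeq n)) / n) atTop
        (𝓝 ((Real.sqrt 5 - 2) * Real.log (v ⬝ᵥ u) +
          ((3 - Real.sqrt 5) / 2) * Real.log (v ⬝ᵥ (A 1).mulVec u)))) ∧
    ((v ⬝ᵥ u = 0 ∨ v ⬝ᵥ (A 1).mulVec u = 0) →
      ∀ n, 4 ≤ n → prodAlong A fibSeq n = 0) :=
  lyapunov_fibonacci_general u v A hA0
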